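/- arXiv:1309.5206 — 6 statements merged into one kernel-verified Lean document; each statement's English description precedes it below -/
import Mathlib

section
/- If x and y are both solutions of the tropical linear system defined by an m×n real matrix A with n ≥ 2, then the componentwise minimum z, defined by z j = min (x j) (y j), is also a solution. (The set of solutions is closed under tropical addition.) -/
/-- `x` is a solution of the tropical linear system defined by `A`: for every row `i`,
the minimum of `A i j + x j` over `j` is attained at at least two distinct indices. -/
def IsSolution {m n : ℕ} (A : Matrix (Fin m) (Fin n) ℝ) (x : Fin n → ℝ) : Prop :=
  ∀ i : Fin m, ∃ j₁ j₂ : Fin n, j₁ ≠ j₂ ∧ (∀ j, A i j₁ + x j₁ ≤ A i j + x j) ∧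
    A i j₁ + x j₁ = A i j₂ + x j₂

private lemma aux_case {m n : ℕ} (A : Matrix (Fin m) (Fin n) ℝ) (x y : Fin n → ℝ)
    (i : Fin m) (j₁ j₂ : Fin n) (hne : j₁ ≠ j₂)
    (hmin : ∀ j, A i j₁ + x j₁ ≤ A i j + x j)
    (heq : A i j₁ + x j₁ = A i j₂ + x j₂)
    (hle : ∀ j, A i j₁ + x j₁ ≤ A i j + y j) :
    ∃ j₁' j₂' : Fin n, j₁' ≠ j₂' ∧
      (∀ j, A i j₁' + min (x j₁') (y j₁') ≤ A i j + min (x j) (y j)) ∧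
      A i j₁' + min (x j₁') (y j₁') = A i j₂' + min (x j₂') (y j₂') := by
  have key : ∀ j, A i j₁ + x j₁ ≤ A i j + min (x j) (y j) := by
    intro j
    rcases le_total (x j) (y j) with h | h
    · rw [min_eq_left h]; exact hmin j
    · rw [min_eq_right h]; exact hle j
  have h1 : A i j₁ + min (x j₁) (y j₁) = A i j₁ + x j₁ := by
    refine le_antisymm (by gcongr; exact min_le_left _ _) (key j₁)
  have h2 : A i j₂ + min (x j₂) (y j₂) = A i j₁ + x j₁ := by
    refine le_antisymm (heq ▸ by gcongr; exact min_le_left _ _) (key j₂)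
  exact ⟨j₁, j₂, hne, fun j => h1 ▸ key j, h1.trans h2.symm⟩

theorem stmt1 {m n : ℕ} (hn : 2 ≤ n) (A : Matrix (Fin m) (Fin n) ℝ) (x y : Fin n → ℝ)
    (hx : IsSolution A x) (hy : IsSolution A y) :
    IsSolution A (fun j => min (x j) (y j)) := by
  intro i
  obtain ⟨j₁, j₂, hne, hmin, heq⟩ := hx i
  obtain ⟨k₁, k₂, kne, kmin, keq⟩ := hy i
  rcases le_total (A i j₁ + x j₁) (A i k₁ + y k₁) with h | h
  · exact aux_case A x y i j₁ j₂ hne hmin heq (fun j => h.trans (kmin j))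
  · have := aux_case A y x i k₁ k₂ kne kmin keq (fun j => h.trans (hmin j))
    simpa [min_comm] using this
end

section
/- Let A be an m×n real matrix with m < n (an underdetermined system where equations are fewer than variables). Then the tropical linear system defined by A is feasible. -/
open Finset Equiv in
theorem trop_key {m : ℕ} (B : Matrix (Fin m) (Fin (m+1)) ℝ) :
    ∃ x : Fin (m+1) → ℝ, ∀ i : Fin m, ∃ j₁ j₂ : Fin (m+1), j₁ ≠ j₂ ∧
      (∀ j, B i j₁ + x j₁ ≤ B i j + x j) ∧ B i j₁ + x j₁ = B i j₂ + x j₂ := by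
  classical
  set S : Perm (Fin (m+1)) → ℝ := fun π => ∑ k : Fin m, B k (π k.castSucc) with hS
  set P : Fin (m+1) → Finset (Perm (Fin (m+1))) :=
    fun j => Finset.univ.filter (fun π => π (Fin.last m) = j) with hP
  have hPne : ∀ j, (P j).Nonempty := fun j =>
    ⟨Equiv.swap (Fin.last m) j, by simp [hP]⟩
  set x : Fin (m+1) → ℝ := fun j => (P j).inf' (hPne j) S with hx
  refine ⟨x, fun i => ?_⟩
  set g : Perm (Fin (m+1)) → ℝ := fun π => B i (π (Fin.last m)) + S π with hg
  obtain ⟨π₀, -, hπ₀⟩ := Finset.exists_min_image Finset.univ g ⟨1, Finset.mem_univ 1⟩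
  have fact1 : ∀ j, g π₀ ≤ B i j + x j := by
    intro j
    obtain ⟨πj, hπjmem, hπj⟩ := Finset.exists_mem_eq_inf' (hPne j) S
    have hjl : πj (Fin.last m) = j := (Finset.mem_filter.mp hπjmem).2
    have : B i j + x j = g πj := by simp only [hg, hx, hjl, hπj]
    rw [this]; exact hπ₀ πj (Finset.mem_univ πj)
  set j₁ := π₀ (Fin.last m) with hj₁
  set j₂ := π₀ i.castSucc with hj₂
  have hne : j₁ ≠ j₂ := by
    intro h
    exact (Fin.castSucc_lt_last i).ne (π₀.injective h).symm
  have h1 : B i j₁ + x j₁ = g π₀ := by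
    have hle : x j₁ ≤ S π₀ := Finset.inf'_le S (by simp [hP, hj₁])
    have hub : B i j₁ + x j₁ ≤ g π₀ := by simp only [hg, ← hj₁]; linarith
    exact le_antisymm hub (fact1 j₁)
  set π₁ : Perm (Fin (m+1)) := π₀ * Equiv.swap (Fin.last m) i.castSucc with hπ₁
  have hπ₁last : π₁ (Fin.last m) = j₂ := by simp [hπ₁, hj₂]
  have hπ₁i : π₁ i.castSucc = j₁ := by simp [hπ₁, hj₁]
  have hπ₁k : ∀ k : Fin m, k ≠ i → π₁ k.castSucc = π₀ k.castSucc := by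
    intro k hk
    have ha : (k.castSucc : Fin (m+1)) ≠ Fin.last m := (Fin.castSucc_lt_last k).ne
    have hb : (k.castSucc : Fin (m+1)) ≠ i.castSucc := by
      simpa using (Fin.castSucc_injective m).ne hk
    simp [hπ₁, Equiv.swap_apply_of_ne_of_ne ha hb]
  have e1 : S π₁ = B i j₁ + ∑ k ∈ Finset.univ.erase i, B k (π₁ k.castSucc) := by
    simp only [hS]
    rw [← Finset.add_sum_erase _ _ (Finset.mem_univ i), hπ₁i]
  have e0 : S π₀ = B i j₂ + ∑ k ∈ Finset.univ.erase i, B k (π₀ k.castSucc) := by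
    simp only [hS]
    rw [← Finset.add_sum_erase _ _ (Finset.mem_univ i), ← hj₂]
  have erest : ∑ k ∈ Finset.univ.erase i, B k (π₁ k.castSucc)
      = ∑ k ∈ Finset.univ.erase i, B k (π₀ k.castSucc) :=
    Finset.sum_congr rfl fun k hk => by rw [hπ₁k k (Finset.ne_of_mem_erase hk)]
  have hsum : B i j₂ + S π₁ = B i j₁ + S π₀ := by
    rw [e1, e0, erest]; ring
  have h2 : B i j₂ + x j₂ = B i j₁ + x j₁ := by
    have hub : x j₂ ≤ S π₁ := Finset.inf'_le S (by simp [hP, hπ₁last])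
    have hle : B i j₂ + x j₂ ≤ g π₀ := by
      have : B i j₂ + S π₁ = g π₀ := by rw [hsum]
      linarith
    have := fact1 j₂
    linarith [h1]
  exact ⟨j₁, j₂, hne, fun j => h1 ▸ fact1 j, h2.symm⟩

theorem stmt12 {m n : ℕ} (hmn : m < n) (A : Matrix (Fin m) (Fin n) ℝ) :
    ∃ x : Fin n → ℝ, IsSolution A x := by
  classical
  rcases Nat.eq_zero_or_pos m with rfl | hm
  · exact ⟨0, fun i => i.elim0⟩
  set c : Fin (m+1) → Fin n := Fin.castLE hmn with hc
  set B : Matrix (Fin m) (Fin (m+1)) ℝ := fun i k => A i (c k) with hB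
  obtain ⟨x₀, hx₀⟩ := trop_key B
  have hne' : Nonempty (Fin m × Fin (m+1) × Fin n) :=
    ⟨⟨⟨0, hm⟩, 0, ⟨0, hm.trans hmn⟩⟩⟩
  have hTne : (Finset.univ : Finset (Fin m × Fin (m+1) × Fin n)).Nonempty :=
    Finset.univ_nonempty
  set M : ℝ := Finset.univ.sup' hTne (fun p : Fin m × Fin (m+1) × Fin n =>
    A p.1 (c p.2.1) + x₀ p.2.1 - A p.1 p.2.2) with hM
  set x : Fin n → ℝ := fun j => if h : j.val < m+1 then x₀ ⟨j.val, h⟩ else M with hx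
  have hxc : ∀ k : Fin (m+1), x (c k) = x₀ k := by
    intro k
    simp [hx, hc, Fin.castLE, k.isLt]
    intro h; have := k.isLt; omega
  refine ⟨x, fun i => ?_⟩
  obtain ⟨j₁, j₂, hne, hmin, heq⟩ := hx₀ i
  refine ⟨c j₁, c j₂, fun h => hne (by simpa [hc, Fin.ext_iff] using h), ?_, ?_⟩
  · intro j
    rw [hxc]
    by_cases hj : j.val < m + 1
    · have hjc : j = c ⟨j.val, hj⟩ := Fin.ext rfl
      rw [hjc, hxc]
      exact hmin ⟨j.val, hj⟩
    · have hxj : x j = M := by simp [hx, hj]; intro h; omega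
      have hMge : A i (c j₁) + x₀ j₁ - A i j ≤ M := by
        rw [hM]
        exact Finset.le_sup'
          (fun p : Fin m × Fin (m+1) × Fin n => A p.1 (c p.2.1) + x₀ p.2.1 - A p.1 p.2.2)
          (Finset.mem_univ (⟨i, j₁, j⟩ : Fin m × Fin (m+1) × Fin n))
      rw [hxj]
      have : A i (c j₁) = B i j₁ := rfl
      linarith
  · rw [hxc, hxc]; exact heq
end

section
/- Suppose the tropical linear system defined by an m×n matrix A has a nonnegative solution (a solution x with all x j ≥ 0). Then among all nonnegative solutions there exists a componentwise smallest one, i.e., a nonnegative solution x* such that x* j ≤ x j for every nonnegative solution x and every j. -/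
lemma min_solution {m n : ℕ} (A : Matrix (Fin m) (Fin n) ℝ) {x y : Fin n → ℝ}
    (hx : IsSolution A x) (hy : IsSolution A y) :
    IsSolution A (fun j => min (x j) (y j)) := by
  intro i
  obtain ⟨j₁, j₂, hne, hmin, heq⟩ := hx i
  obtain ⟨k₁, k₂, kne, kmin, keq⟩ := hy i
  rcases le_total (A i j₁ + x j₁) (A i k₁ + y k₁) with hle | hle
  · have h1 : min (x j₁) (y j₁) = x j₁ := min_eq_left (by have := kmin j₁; linarith)
    have h2 : min (x j₂) (y j₂) = x j₂ := min_eq_left (by have := kmin j₂; linarith)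
    refine ⟨j₁, j₂, hne, ?_, by simp only [h1, h2]; exact heq⟩
    intro j
    simp only [h1]
    rcases le_total (x j) (y j) with hj | hj
    · rw [min_eq_left hj]; exact hmin j
    · rw [min_eq_right hj]; have := kmin j; linarith
  · have h1 : min (x k₁) (y k₁) = y k₁ := min_eq_right (by have := hmin k₁; linarith)
    have h2 : min (x k₂) (y k₂) = y k₂ := min_eq_right (by have := hmin k₂; linarith)
    refine ⟨k₁, k₂, kne, ?_, by simp only [h1, h2]; exact keq⟩
    intro j
    simp only [h1]
    rcases le_total (x j) (y j) with hj | hj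
    · rw [min_eq_left hj]; have := hmin j; linarith
    · rw [min_eq_right hj]; exact kmin j

lemma inf'_solution {m n : ℕ} (A : Matrix (Fin m) (Fin n) ℝ) {ι : Type*}
    (s : Finset ι) (hs : s.Nonempty) (f : ι → Fin n → ℝ) :
    (∀ i ∈ s, IsSolution A (f i)) →
    IsSolution A (fun j => s.inf' hs (fun i => f i j)) := by
  induction hs using Finset.Nonempty.cons_induction with
  | singleton a => intro hf; simpa using hf a (Finset.mem_singleton_self a)
  | cons a s h hs ih =>
    intro hf
    have h1 : IsSolution A (fun j => s.inf' hs fun i => f i j) :=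
      ih (fun i hi => hf i (Finset.mem_cons_of_mem hi))
    have h2 := min_solution A (hf a (Finset.mem_cons_self a s)) h1
    convert h2 using 1
    funext j
    rw [Finset.inf'_cons (H := hs)]

lemma isClosed_sol {m n : ℕ} (A : Matrix (Fin m) (Fin n) ℝ) :
    IsClosed {x : Fin n → ℝ | IsSolution A x} := by
  have hset : {x : Fin n → ℝ | IsSolution A x} =
      ⋂ i, ⋃ p : Fin n × Fin n, {x : Fin n → ℝ | p.1 ≠ p.2 ∧
        (∀ j, A i p.1 + x p.1 ≤ A i j + x j) ∧ A i p.1 + x p.1 = A i p.2 + x p.2} := by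
    ext x
    simp only [Set.mem_setOf_eq, Set.mem_iInter, Set.mem_iUnion, Prod.exists, IsSolution]
  rw [hset]
  refine isClosed_iInter fun i => ?_
  refine isClosed_iUnion_of_finite fun p => ?_
  by_cases hp : p.1 = p.2
  · convert isClosed_empty using 1
    ext x; simp [hp]
  · have heq : {x : Fin n → ℝ | p.1 ≠ p.2 ∧
        (∀ j, A i p.1 + x p.1 ≤ A i j + x j) ∧ A i p.1 + x p.1 = A i p.2 + x p.2} =
        (⋂ j, {x : Fin n → ℝ | A i p.1 + x p.1 ≤ A i j + x j}) ∩
          {x : Fin n → ℝ | A i p.1 + x p.1 = A i p.2 + x p.2} := by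
      ext x; simp [hp, Set.mem_iInter]
    rw [heq]
    exact (isClosed_iInter fun j =>
        isClosed_le (continuous_const.add (continuous_apply p.1))
          (continuous_const.add (continuous_apply j))).inter
      (isClosed_eq (continuous_const.add (continuous_apply p.1))
        (continuous_const.add (continuous_apply p.2)))

theorem stmt13 {m n : ℕ} (A : Matrix (Fin m) (Fin n) ℝ)
    (h : ∃ x : Fin n → ℝ, IsSolution A x ∧ ∀ j, 0 ≤ x j) :
    ∃ xstar : Fin n → ℝ, IsSolution A xstar ∧ (∀ j, 0 ≤ xstar j) ∧
      ∀ x : Fin n → ℝ, IsSolution A x → (∀ j, 0 ≤ x j) → ∀ j, xstar j ≤ x j := by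
  obtain ⟨x₀, hx₀, hx₀0⟩ := h
  rcases Nat.eq_zero_or_pos n with hn | hn
  · exact ⟨x₀, hx₀, hx₀0, fun x hx hx0 j => absurd j.isLt (by omega)⟩
  set S : Fin n → Set ℝ :=
    fun j => {t | ∃ x : Fin n → ℝ, IsSolution A x ∧ (∀ j', 0 ≤ x j') ∧ x j = t} with hS
  have hSne : ∀ j, (S j).Nonempty := fun j => ⟨x₀ j, x₀, hx₀, hx₀0, rfl⟩
  have hSbd : ∀ j, ∀ t ∈ S j, (0:ℝ) ≤ t := by
    rintro j t ⟨x, _, hx0, rfl⟩; exact hx0 j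
  set xs : Fin n → ℝ := fun j => sInf (S j) with hxs
  have hxs0 : ∀ j, 0 ≤ xs j := fun j => le_csInf (hSne j) (hSbd j)
  have hxsle : ∀ x : Fin n → ℝ, IsSolution A x → (∀ j', 0 ≤ x j') → ∀ j, xs j ≤ x j :=
    fun x hx hx0 j => csInf_le ⟨0, hSbd j⟩ ⟨x, hx, hx0, rfl⟩
  have key : ∀ ε > (0:ℝ), ∃ y : Fin n → ℝ, IsSolution A y ∧ (∀ j, 0 ≤ y j) ∧
      ∀ j, xs j ≤ y j ∧ y j < xs j + ε := by
    intro ε hε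
    have hsel : ∀ j : Fin n, ∃ x : Fin n → ℝ,
        IsSolution A x ∧ (∀ j', 0 ≤ x j') ∧ x j < xs j + ε := by
      intro j
      obtain ⟨t, ht, htlt⟩ := Real.lt_sInf_add_pos (hSne j) hε
      obtain ⟨x, hx1, hx2, hx3⟩ := ht
      exact ⟨x, hx1, hx2, hx3 ▸ htlt⟩
    choose f hf1 hf2 hf3 using hsel
    have hneU : (Finset.univ : Finset (Fin n)).Nonempty :=
      Finset.univ_nonempty_iff.mpr (Fin.pos_iff_nonempty.mp hn)
    refine ⟨fun j => Finset.univ.inf' hneU (fun i => f i j),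
      inf'_solution A _ hneU f (fun i _ => hf1 i), ?_, ?_⟩
    · intro j; exact Finset.le_inf' hneU _ fun i _ => hf2 i j
    · intro j
      refine ⟨Finset.le_inf' hneU _ fun i _ => hxsle (f i) (hf1 i) (hf2 i) j, ?_⟩
      exact lt_of_le_of_lt (Finset.inf'_le _ (Finset.mem_univ j)) (hf3 j)
  choose Y hY1 hY2 hY3 using fun k : ℕ => key (1/(k+1)) (by positivity)
  have htend : Filter.Tendsto Y Filter.atTop (nhds xs) := by
    rw [tendsto_pi_nhds]
    intro j
    have hub : Filter.Tendsto (fun k : ℕ => xs j + 1/(k+1)) Filter.atTop (nhds (xs j)) := by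
      have h0 : Filter.Tendsto (fun k : ℕ => (1:ℝ)/(k+1)) Filter.atTop (nhds 0) :=
        tendsto_one_div_add_atTop_nhds_zero_nat
      simpa using tendsto_const_nhds.add h0
    exact tendsto_of_tendsto_of_tendsto_of_le_of_le tendsto_const_nhds hub
      (fun k => (hY3 k j).1) (fun k => le_of_lt (hY3 k j).2)
  have hxsol : IsSolution A xs :=
    (isClosed_sol A).mem_of_tendsto htend (Filter.Eventually.of_forall hY1)
  exact ⟨xs, hxsol, hxs0, hxsle⟩
end

section
/- Let x and y be solutions of the tropical linear system defined by A, and let c, d ∈ ℝ. Then the vector z defined by z j = min (x j + c) (y j + d) is also a solution. (Solutions form a tropical submodule.) -/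
theorem stmt14 {m n : ℕ} (hn : 2 ≤ n) (A : Matrix (Fin m) (Fin n) ℝ)
    (x y : Fin n → ℝ) (c d : ℝ) (hx : IsSolution A x) (hy : IsSolution A y) :
    IsSolution A (fun j => min (x j + c) (y j + d)) := by
  intro i
  obtain ⟨j₁, j₂, hne, hmin, heq⟩ := hx i
  obtain ⟨k₁, k₂, kne, kmin, keq⟩ := hy i
  rcases le_total (A i j₁ + x j₁ + c) (A i k₁ + y k₁ + d) with h | h
  · have lb : ∀ j, A i j₁ + x j₁ + c ≤ A i j + min (x j + c) (y j + d) := by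
      intro j
      rcases min_cases (x j + c) (y j + d) with ⟨he, _⟩ | ⟨he, _⟩ <;> rw [he]
      · have := hmin j; linarith
      · have := kmin j; linarith
    have e1 : A i j₁ + min (x j₁ + c) (y j₁ + d) = A i j₁ + x j₁ + c := by
      have h1 := lb j₁
      have h2 : min (x j₁ + c) (y j₁ + d) ≤ x j₁ + c := min_le_left _ _
      linarith
    have e2 : A i j₂ + min (x j₂ + c) (y j₂ + d) = A i j₁ + x j₁ + c := by
      have h1 := lb j₂
      have h2 : min (x j₂ + c) (y j₂ + d) ≤ x j₂ + c := min_le_left _ _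
      linarith
    exact ⟨j₁, j₂, hne, fun j => by simpa [e1] using lb j, by simp [e1, e2]⟩
  · have lb : ∀ j, A i k₁ + y k₁ + d ≤ A i j + min (x j + c) (y j + d) := by
      intro j
      rcases min_cases (x j + c) (y j + d) with ⟨he, _⟩ | ⟨he, _⟩ <;> rw [he]
      · have := hmin j; linarith
      · have := kmin j; linarith
    have e1 : A i k₁ + min (x k₁ + c) (y k₁ + d) = A i k₁ + y k₁ + d := by
      have h1 := lb k₁
      have h2 : min (x k₁ + c) (y k₁ + d) ≤ y k₁ + d := min_le_right _ _
      linarith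
    have e2 : A i k₂ + min (x k₂ + c) (y k₂ + d) = A i k₁ + y k₁ + d := by
      have h1 := lb k₂
      have h2 : min (x k₂ + c) (y k₂ + d) ≤ y k₂ + d := min_le_right _ _
      linarith
    exact ⟨k₁, k₂, kne, fun j => by simpa [e1] using lb j, by simp [e1, e2]⟩
end

section
/- Let A be an m×n matrix defining a feasible tropical linear system, and let A' be a matrix obtained from A by appending one additional row that is a tropical linear combination of rows of A, i.e., row a' satisfies a' j = min over i of (A i j + c i) for some constants c : Fin m → ℝ, where m ≥ 2 and for every j the minimum defining a' j is attained at least twice. Then every solution of A is a solution of A'. -/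
/-!
Adding `x` to the rows, the new row becomes the pointwise minimum `F` of the old rows shifted by the
constants `c i`. Let `F` attain its minimum at `j₀` and let `F j₀` come from the shifted row `G`.
At every column `k` where `G` attains its minimum, `F k ≤ G k = min G ≤ G j₀ = F j₀ = min F`, so
`k` minimises `F` as well; since `x` solves the old row, there are two such columns.
-/

def MinAttainedTwice {ι α : Type*} [LE α] (f : ι → α) : Prop :=
  ∃ j₁ j₂, j₁ ≠ j₂ ∧ (∀ j, f j₁ ≤ f j) ∧ f j₁ = f j₂

theorem isSolution_iff_forall_minAttainedTwice {m n : ℕ} (A : Matrix (Fin m) (Fin n) ℝ)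
    (x : Fin n → ℝ) : IsSolution A x ↔ ∀ i, MinAttainedTwice fun j => A i j + x j :=
  Iff.rfl

theorem isSolution_snoc_iff {m n : ℕ} (A : Matrix (Fin m) (Fin n) ℝ) (r x : Fin n → ℝ) :
    IsSolution (Matrix.of (Fin.snoc A r) : Matrix (Fin (m + 1)) (Fin n) ℝ) x ↔
      IsSolution A x ∧ MinAttainedTwice fun j => r j + x j := by
  rw [isSolution_iff_forall_minAttainedTwice, isSolution_iff_forall_minAttainedTwice,
    Fin.forall_fin_succ']
  simp [Fin.snoc]

theorem MinAttainedTwice.add_const {ι α : Type*} [Add α] [Preorder α] [AddRightMono α]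
    {f : ι → α} (hf : MinAttainedTwice f) (c : α) : MinAttainedTwice fun j => f j + c := by
  obtain ⟨j₁, j₂, hne, hmin, heq⟩ := hf
  exact ⟨j₁, j₂, hne, fun j => add_le_add_left (hmin j) c, congrArg (· + c) heq⟩

theorem MinAttainedTwice.of_pointwise_min {ι κ α : Type*} [Finite ι] [Nonempty κ] [LinearOrder α]
    {F : ι → α} {G : κ → ι → α} (hG : ∀ i, MinAttainedTwice (G i)) (hle : ∀ i j, F j ≤ G i j)
    (hattained : ∀ j, ∃ i, F j = G i j) : MinAttainedTwice F := by
  have : Nonempty ι := by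
    obtain ⟨j, -⟩ := hG (Classical.arbitrary κ)
    exact ⟨j⟩
  obtain ⟨j₀, hj₀⟩ := Finite.exists_min F
  obtain ⟨i, hi⟩ := hattained j₀
  obtain ⟨k₁, k₂, hne, hk₁, hk₁₂⟩ := hG i
  have hminimising : ∀ k, G i k = G i k₁ → F k = F j₀ := fun k hk => le_antisymm
    (calc F k ≤ G i k := hle i k
      _ = G i k₁ := hk
      _ ≤ G i j₀ := hk₁ j₀
      _ = F j₀ := hi.symm)
    (hj₀ k)
  refine ⟨k₁, k₂, hne, fun j => ?_, ?_⟩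
  · rw [hminimising k₁ rfl]
    exact hj₀ j
  · rw [hminimising k₁ rfl, hminimising k₂ hk₁₂.symm]

theorem stmt17_general {m n : ℕ} (hm : 2 ≤ m) (A : Matrix (Fin m) (Fin n) ℝ)
    (c : Fin m → ℝ) (a' : Fin n → ℝ)
    (hmin : ∀ j, ∀ i, a' j ≤ A i j + c i)
    (htwo : ∀ j, ∃ i₁ i₂ : Fin m, i₁ ≠ i₂ ∧ a' j = A i₁ j + c i₁ ∧
      A i₁ j + c i₁ = A i₂ j + c i₂) :
    ∀ x : Fin n → ℝ, IsSolution A x →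
      IsSolution (Matrix.of (Fin.snoc A a') : Matrix (Fin (m + 1)) (Fin n) ℝ) x := by
  intro x hx
  refine (isSolution_snoc_iff A a' x).2 ⟨hx, ?_⟩
  have : Nonempty (Fin m) := ⟨⟨0, by omega⟩⟩
  refine MinAttainedTwice.of_pointwise_min (fun i => MinAttainedTwice.add_const (hx i) (c i))
    (fun i j => ?_) (fun j => ?_)
  · linarith [hmin j i]
  · obtain ⟨i, -, -, hi, -⟩ := htwo j
    exact ⟨i, by rw [hi, add_right_comm]⟩

theorem stmt17 {m n : ℕ} (hm : 2 ≤ m) (A : Matrix (Fin m) (Fin n) ℝ)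
    (hfeas : ∃ x : Fin n → ℝ, IsSolution A x)
    (c : Fin m → ℝ) (a' : Fin n → ℝ)
    (hmin : ∀ j, ∀ i, a' j ≤ A i j + c i)
    (htwo : ∀ j, ∃ i₁ i₂ : Fin m, i₁ ≠ i₂ ∧ a' j = A i₁ j + c i₁ ∧
      A i₁ j + c i₁ = A i₂ j + c i₂) :
    ∀ x : Fin n → ℝ, IsSolution A x →
      IsSolution (Matrix.of (Fin.snoc A a') : Matrix (Fin (m + 1)) (Fin n) ℝ) x :=
  stmt17_general hm A c a' hmin htwo
end

section
/- Let A be an m×n real matrix. If there exists a nonnegative solution of the tropical system defined by A, then the componentwise infimum x* over all nonnegative solutions satisfies: x* itself is a solution. (Used implicitly: the solution set is closed under pointwise infima over nonempty families that are bounded below.) -/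
theorem stmt19 {m n : ℕ} (A : Matrix (Fin m) (Fin n) ℝ)
    (h : ∃ x : Fin n → ℝ, IsSolution A x ∧ ∀ j, 0 ≤ x j) :
    IsSolution A (fun j => sInf {r : ℝ | ∃ x : Fin n → ℝ,
      IsSolution A x ∧ (∀ k, 0 ≤ x k) ∧ r = x j}) := by
  obtain ⟨x₀, hx₀, hx₀0⟩ := h
  set g : Fin n → ℝ := fun j => sInf {r : ℝ | ∃ x : Fin n → ℝ,
      IsSolution A x ∧ (∀ k, 0 ≤ x k) ∧ r = x j} with hgdef
  have hne : ∀ j : Fin n, ({r : ℝ | ∃ x : Fin n → ℝ,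
      IsSolution A x ∧ (∀ k, 0 ≤ x k) ∧ r = x j}).Nonempty :=
    fun j => ⟨x₀ j, x₀, hx₀, hx₀0, rfl⟩
  have hbdd : ∀ j : Fin n, BddBelow {r : ℝ | ∃ x : Fin n → ℝ,
      IsSolution A x ∧ (∀ k, 0 ≤ x k) ∧ r = x j} := by
    intro j
    refine ⟨0, ?_⟩
    rintro r ⟨x, _, hx0, rfl⟩
    exact hx0 j
  have hle : ∀ (j : Fin n) (x : Fin n → ℝ), IsSolution A x → (∀ k, 0 ≤ x k) → g j ≤ x j :=
    fun j x hx hx0 => csInf_le (hbdd j) ⟨x, hx, hx0, rfl⟩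
  have happrox : ∀ (j : Fin n) (ε : ℝ), 0 < ε →
      ∃ x : Fin n → ℝ, IsSolution A x ∧ (∀ k, 0 ≤ x k) ∧ x j < g j + ε := by
    intro j ε hε
    have hlt : sInf {r : ℝ | ∃ x : Fin n → ℝ,
        IsSolution A x ∧ (∀ k, 0 ≤ x k) ∧ r = x j} < g j + ε :=
      lt_add_of_pos_right (g j) hε
    obtain ⟨r, hr, hrlt⟩ := exists_lt_of_csInf_lt (hne j) hlt
    obtain ⟨x, hx, hx0, rfl⟩ := hr
    exact ⟨x, hx, hx0, hrlt⟩
  intro i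
  obtain ⟨a, b, hab, _, _⟩ := hx₀ i
  -- minimizer of f j = A i j + g j
  obtain ⟨j₁, -, hj₁min⟩ := Finset.exists_min_image Finset.univ (fun j => A i j + g j)
    ⟨a, Finset.mem_univ a⟩
  have hj₁min' : ∀ j, A i j₁ + g j₁ ≤ A i j + g j := fun j => hj₁min j (Finset.mem_univ j)
  -- find a second minimizer
  by_contra hcon
  push_neg at hcon
  have hstrict : ∀ j, j ≠ j₁ → A i j₁ + g j₁ < A i j + g j := by
    intro j hj
    rcases lt_or_eq_of_le (hj₁min' j) with hlt | heq
    · exact hlt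
    · exact absurd heq (hcon j₁ j (Ne.symm hj) hj₁min')
  -- erase j₁ is nonempty
  have hne2 : (Finset.univ.erase j₁).Nonempty := by
    rcases ne_or_eq a j₁ with ha | rfl
    · exact ⟨a, Finset.mem_erase.2 ⟨ha, Finset.mem_univ a⟩⟩
    · exact ⟨b, Finset.mem_erase.2 ⟨(Ne.symm hab), Finset.mem_univ b⟩⟩
  obtain ⟨jm, hjm, hjmmin⟩ := Finset.exists_min_image (Finset.univ.erase j₁)
    (fun j => A i j + g j) hne2
  set ε : ℝ := (A i jm + g jm) - (A i j₁ + g j₁) with hεdef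
  have hεpos : 0 < ε := by
    have := hstrict jm (Finset.mem_erase.1 hjm).1
    simp only [hεdef]; linarith
  obtain ⟨x, hx, hx0, hxlt⟩ := happrox j₁ ε hεpos
  -- x has a unique minimizer at row i : contradiction
  have hxuniq : ∀ j, j ≠ j₁ → A i j₁ + x j₁ < A i j + x j := by
    intro j hj
    have h1 : A i j₁ + x j₁ < A i j₁ + g j₁ + ε := by linarith
    have h2 : A i j₁ + g j₁ + ε ≤ A i j + g j := by
      have := hjmmin j (Finset.mem_erase.2 ⟨hj, Finset.mem_univ j⟩)
      simp only [hεdef] at *; linarith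
    have h3 : g j ≤ x j := hle j x hx hx0
    linarith
  obtain ⟨c, d, hcd, hcmin, hceq⟩ := hx i
  rcases ne_or_eq d j₁ with hd | heq
  · have := hxuniq d hd
    have := hcmin j₁
    linarith [hceq]
  · rw [heq] at hcd
    have := hxuniq c hcd
    have := hcmin j₁
    linarith
end
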